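/- Let α₄ := (2/3)·(2 − (√2 − 1)^{−1/3} + (√2 − 1)^{1/3}). Then 2/3 < α₄ < 2/√3, and for every real α with 2/3 < α < 2/√3 one has 4 − 8/(3α) ≤ (4 − 3α²)/(4 − 3α) if and only if α ≤ α₄; in particular 4 − 8/(3α₄) = (4 − 3α₄²)/(4 − 3α₄). (This is the statement that α_*(4) = α₄ for m(α,4) = min{(4−3α²)/(4−3α), 4 − 8/(3α)}.) -/

import Mathlib

/-!
Clearing the (positive) denominators, `4 − 8/(3α) ≤ (4 − 3α²)/(4 − 3α)` becomes `p α ≤ 0` for the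
strictly increasing cubic `p α = 9α³ − 36α² + 60α − 32`. The substitution `α = (2/3)(2 + u)` turns
`p` into `(8/3)(u³ + 3u + 2)`, whose real root Cardano's formula gives as `u = t − t⁻¹` with
`t³ = √2 − 1`, since `t³ − t⁻³ = (√2 − 1) − (√2 + 1) = −2`. Hence `α₄` is the unique zero of `p`,
and it lies in `(2/3, 2/√3)` because `p (2/3) < 0 < p (2/√3)`.
-/

noncomputable def alphaStar4 : ℝ :=
  (2 / 3) * (2 - (Real.sqrt 2 - 1) ^ (-(1 : ℝ) / 3) + (Real.sqrt 2 - 1) ^ ((1 : ℝ) / 3))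

namespace AlphaStar4

def cubic (α : ℝ) : ℝ := 9 * α ^ 3 - 36 * α ^ 2 + 60 * α - 32

lemma strictMono_cubic : StrictMono cubic := by
  intro x y hxy
  have hq : 0 < 9 * (x ^ 2 + x * y + y ^ 2) - 36 * (x + y) + 60 := by
    nlinarith [sq_nonneg (x + y - 8 / 3), sq_nonneg (x - y)]
  have : cubic y - cubic x = (y - x) * (9 * (x ^ 2 + x * y + y ^ 2) - 36 * (x + y) + 60) := by
    unfold cubic; ring
  nlinarith [mul_pos (sub_pos.mpr hxy) hq]

lemma sub_eq_cubic_div {α : ℝ} (h₀ : α ≠ 0) (h₁ : 4 - 3 * α ≠ 0) :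
    4 - 8 / (3 * α) - (4 - 3 * α ^ 2) / (4 - 3 * α) = cubic α / (3 * α * (4 - 3 * α)) := by
  unfold cubic
  field_simp
  ring

lemma le_iff_cubic_nonpos {α : ℝ} (h₀ : 0 < α) (h₁ : α < 4 / 3) :
    4 - 8 / (3 * α) ≤ (4 - 3 * α ^ 2) / (4 - 3 * α) ↔ cubic α ≤ 0 := by
  have hden : 0 < 3 * α * (4 - 3 * α) := by nlinarith
  rw [← sub_nonpos, sub_eq_cubic_div h₀.ne' (by linarith), div_le_iff₀ hden, zero_mul]

lemma eq_iff_cubic_eq_zero {α : ℝ} (h₀ : α ≠ 0) (h₁ : 4 - 3 * α ≠ 0) :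
    4 - 8 / (3 * α) = (4 - 3 * α ^ 2) / (4 - 3 * α) ↔ cubic α = 0 := by
  rw [← sub_eq_zero, sub_eq_cubic_div h₀ h₁, div_eq_zero_iff, or_iff_left (by positivity)]

lemma cubic_affine (u : ℝ) : cubic (2 / 3 * (2 + u)) = 8 / 3 * (u ^ 3 + 3 * u + 2) := by
  unfold cubic; ring

lemma sub_inv_cube_add {t : ℝ} (ht : t ≠ 0) :
    (t - t⁻¹) ^ 3 + 3 * (t - t⁻¹) = t ^ 3 - (t ^ 3)⁻¹ := by
  field_simp
  ring

lemma alphaStar4_eq :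
    alphaStar4 = 2 / 3 * (2 + ((Real.sqrt 2 - 1) ^ ((1 : ℝ) / 3) -
      ((Real.sqrt 2 - 1) ^ ((1 : ℝ) / 3))⁻¹)) := by
  have hpos : 0 ≤ Real.sqrt 2 - 1 := by
    linarith [Real.one_lt_sqrt_two]
  rw [alphaStar4, neg_div, Real.rpow_neg hpos]
  ring

lemma cubic_alphaStar4 : cubic alphaStar4 = 0 := by
  have hpos : 0 < Real.sqrt 2 - 1 := by linarith [Real.one_lt_sqrt_two]
  have ht3 : ((Real.sqrt 2 - 1) ^ ((1 : ℝ) / 3)) ^ 3 = Real.sqrt 2 - 1 := by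
    simpa [one_div] using Real.rpow_inv_natCast_pow hpos.le (show (3 : ℕ) ≠ 0 by norm_num)
  have hinv : (Real.sqrt 2 - 1)⁻¹ = Real.sqrt 2 + 1 := by
    apply inv_eq_of_mul_eq_one_right
    nlinarith [Real.sq_sqrt (show (0 : ℝ) ≤ 2 by norm_num)]
  rw [alphaStar4_eq, cubic_affine, sub_inv_cube_add (by positivity), ht3, hinv]
  ring

lemma cubic_two_div_sqrt_three_pos : 0 < cubic (2 / Real.sqrt 3) := by
  have hs : Real.sqrt 3 ^ 2 = 3 := Real.sq_sqrt (by norm_num)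
  have hs0 : 0 < Real.sqrt 3 := by positivity
  have : cubic (2 / Real.sqrt 3) = 16 * (9 - 5 * Real.sqrt 3) / Real.sqrt 3 := by
    unfold cubic; field_simp; nlinarith
  rw [this]
  apply div_pos _ hs0
  nlinarith

end AlphaStar4

open AlphaStar4 in
/-- `2/3 < α₄ < 2/√3`, and for every real `α` with `2/3 < α < 2/√3`
one has `4 − 8/(3α) ≤ (4 − 3α²)/(4 − 3α)` if and only if `α ≤ α₄`; in particular
`4 − 8/(3α₄) = (4 − 3α₄²)/(4 − 3α₄)`. This is the statement `α_*(4) = α₄`. -/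
theorem statement4 :
    (2 / 3 < alphaStar4 ∧ alphaStar4 < 2 / Real.sqrt 3) ∧
    (∀ α : ℝ, 2 / 3 < α → α < 2 / Real.sqrt 3 →
      (4 - 8 / (3 * α) ≤ (4 - 3 * α ^ 2) / (4 - 3 * α) ↔ α ≤ alphaStar4)) ∧
    4 - 8 / (3 * alphaStar4) = (4 - 3 * alphaStar4 ^ 2) / (4 - 3 * alphaStar4) := by
  have h₀ := cubic_alphaStar4
  have hlow : 2 / 3 < alphaStar4 := strictMono_cubic.lt_iff_lt.mp (by rw [h₀]; norm_num [cubic])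
  have hup : alphaStar4 < 2 / Real.sqrt 3 :=
    strictMono_cubic.lt_iff_lt.mp (h₀ ▸ cubic_two_div_sqrt_three_pos)
  have hsqrt : 2 / Real.sqrt 3 < 4 / 3 := by
    rw [div_lt_div_iff₀ (by positivity) (by norm_num)]
    nlinarith [Real.sq_sqrt (show (0 : ℝ) ≤ 3 by norm_num), Real.sqrt_nonneg 3]
  refine ⟨⟨hlow, hup⟩, fun α hα₁ hα₂ => ?_, ?_⟩
  · rw [le_iff_cubic_nonpos (by linarith) (by linarith), ← h₀, strictMono_cubic.le_iff_le]
  · exact (eq_iff_cubic_eq_zero (by linarith) (by linarith)).mpr h₀
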